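/- arXiv:2505.19570 — 2 statements merged into one kernel-verified Lean document; each statement's English description precedes it below -/
import Mathlib

section
/- Let G be the cumulative distribution function of a Laplace distribution with location 0 and scale β > 0, i.e. G(x) = (1/2)·exp(x/β) for x ≤ 0 and G(x) = 1 - (1/2)·exp(-x/β) for x ≥ 0. Then for all real a ≤ b with 0 ≤ b - a ≤ β and a ≥ 0, we have (1/2)·exp(-|b|/β)·((b-a)/β - e·((b-a)/β)²) ≤ G(b) - G(a) ≤ (1/2)·exp(-|b|/β)·((b-a)/β + e·((b-a)/β)²). -/
/-- Bounds on increments of the Laplace(0, β) CDF, for `0 ≤ a ≤ b`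
with `b - a ≤ β`. -/
theorem laplace_cdf_increment_bounds (β : ℝ) (hβ : 0 < β)
    (G : ℝ → ℝ)
    (hG : ∀ x, G x = if x ≤ 0 then Real.exp (x / β) / 2 else 1 - Real.exp (-x / β) / 2)
    (a b : ℝ) (hab : a ≤ b) (hba : b - a ≤ β) (ha : 0 ≤ a) :
    (1 / 2) * Real.exp (-|b| / β) * ((b - a) / β - Real.exp 1 * ((b - a) / β) ^ 2)
        ≤ G b - G a
    ∧ G b - G a
        ≤ (1 / 2) * Real.exp (-|b| / β) * ((b - a) / β + Real.exp 1 * ((b - a) / β) ^ 2) := by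
  have hb : 0 ≤ b := le_trans ha hab
  set w : ℝ := (b - a) / β with hw
  have hw0 : 0 ≤ w := div_nonneg (by linarith) hβ.le
  have hw1 : w ≤ 1 := by
    rw [hw, div_le_one hβ]; exact hba
  -- G values
  have hGa : G a = 1 - Real.exp (-a / β) / 2 := by
    rw [hG]
    split_ifs with h
    · have : a = 0 := le_antisymm h ha
      norm_num [this]
    · rfl
  have hGb : G b = 1 - Real.exp (-b / β) / 2 := by
    rw [hG]
    split_ifs with h
    · have : b = 0 := le_antisymm h hb
      norm_num [this]
    · rfl
  have habs : |b| = b := abs_of_nonneg hb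
  have hsplit : -a / β = -b / β + w := by
    rw [hw]; field_simp; ring
  have hE : Real.exp (-a / β) = Real.exp (-b / β) * Real.exp w := by
    rw [hsplit, Real.exp_add]
  -- exp bound
  have key : |Real.exp w - ∑ i ∈ Finset.range 2, w ^ i / i.factorial|
      ≤ |w| ^ 2 * ((2 + 1 : ℕ) / ((2).factorial * 2)) := by
    apply Real.exp_bound (by rw [abs_of_nonneg hw0]; exact hw1) (by norm_num)
  simp [Finset.sum_range_succ, Nat.factorial, abs_of_nonneg hw0] at key
  have key' : |Real.exp w - (1 + w)| ≤ (3/4) * w ^ 2 := by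
    rw [abs_le] at key ⊢
    constructor <;> nlinarith [key.1, key.2]
  have he : (3/4 : ℝ) ≤ Real.exp 1 := by
    nlinarith [Real.add_one_le_exp (1 : ℝ)]
  have hpos : 0 < Real.exp (-b / β) := Real.exp_pos _
  rw [hGa, hGb, habs, hE, abs_le] at *
  constructor <;> nlinarith [key'.1, key'.2, sq_nonneg w, mul_le_mul_of_nonneg_left he (sq_nonneg w), mul_le_mul_of_nonneg_left key'.1 hpos.le, mul_le_mul_of_nonneg_left key'.2 hpos.le, mul_le_mul_of_nonneg_left (mul_le_mul_of_nonneg_left he (sq_nonneg w)) hpos.le]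
end

section
/- Let ε and Z be random variables with E[ε] = 0, |ε| ≤ M almost surely, and Z taking values in [z_L, z_H]. Then ∫_{z_L}^{z_H} E[Var(E[1{Z ≤ z} | σ(ε)])] dz ≥ Cov(ε, Z)² / ((z_H - z_L) · M²), where the variance is over the conditional expectation given ε. -/
open MeasureTheory ProbabilityTheory

/-! By the pull-out property, `Cov(ε, 1{Z ≤ z}) = Cov(ε, E[1{Z ≤ z} | ε])`, so Cauchy–Schwarz and
`Var ε ≤ M²` give `Cov(ε, 1{Z ≤ z})² ≤ M² Var(E[1{Z ≤ z} | ε])` for every `z`. Integrating over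
`[zL, zH]`, Cauchy–Schwarz on the interval and Fubini with `∫_{zL}^{zH} 1{Z ≤ z} dz = zH - Z`
bound the left-hand side below by `Cov(ε, Z)² / ((zH - zL) M²)`. -/

lemma sq_integral_mul_le_integral_sq_mul_integral_sq {α : Type*} {mα : MeasurableSpace α}
    {μ : Measure α} {f g : α → ℝ} (hf : MemLp f 2 μ) (hg : MemLp g 2 μ) :
    (∫ a, f a * g a ∂μ) ^ 2 ≤ (∫ a, f a ^ 2 ∂μ) * ∫ a, g a ^ 2 ∂μ := by
  have hquad : ∀ t : ℝ, 0 ≤ (∫ a, f a ^ 2 ∂μ) * (t * t) + (2 * ∫ a, f a * g a ∂μ) * t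
      + ∫ a, g a ^ 2 ∂μ := by
    intro t
    have hfg : Integrable (fun a => f a * g a) μ := hf.integrable_mul hg
    calc 0 ≤ ∫ a, (t * f a + g a) ^ 2 ∂μ := integral_nonneg fun a => sq_nonneg _
      _ = ∫ a, (t * t) * f a ^ 2 + (2 * t) * (f a * g a) + g a ^ 2 ∂μ := by
          congr 1 with a; ring
      _ = _ := by
          have hsum : Integrable (fun a => (t * t) * f a ^ 2 + (2 * t) * (f a * g a)) μ :=
            (hf.integrable_sq.const_mul _).add (hfg.const_mul _)
          rw [integral_add hsum hg.integrable_sq,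
            integral_add (hf.integrable_sq.const_mul _) (hfg.const_mul _),
            integral_const_mul, integral_const_mul]
          ring
  have hdiscrim := discrim_le_zero hquad
  rw [discrim] at hdiscrim
  nlinarith

section Covariance

variable {Ω : Type*} {m m0 : MeasurableSpace Ω} {μ : Measure Ω}

lemma sq_covariance_le_variance_mul_variance [IsFiniteMeasure μ] {X Y : Ω → ℝ}
    (hX : MemLp X 2 μ) (hY : MemLp Y 2 μ) :
    cov[X, Y; μ] ^ 2 ≤ Var[X; μ] * Var[Y; μ] := by
  rw [covariance, variance_eq_integral hX.aemeasurable, variance_eq_integral hY.aemeasurable]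
  exact sq_integral_mul_le_integral_sq_mul_integral_sq (hX.sub (memLp_const _))
    (hY.sub (memLp_const _))

lemma covariance_condExp_right [IsProbabilityMeasure μ] (hm : m ≤ m0) {X Y : Ω → ℝ}
    (hXm : StronglyMeasurable[m] X) (hX : MemLp X 2 μ) (hY : MemLp Y 2 μ) :
    cov[X, μ[Y | m]; μ] = cov[X, Y; μ] := by
  rw [covariance_eq_sub hX (hY.condExp one_le_two), covariance_eq_sub hX hY, integral_condExp hm]
  have hpull : μ[X * Y | m] =ᵐ[μ] X * μ[Y | m] :=
    condExp_mul_of_stronglyMeasurable_left hXm (hX.integrable_mul hY) (hY.integrable one_le_two)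
  rw [← integral_congr_ae hpull, integral_condExp hm]

lemma sq_covariance_le_sq_mul_variance_condExp [IsProbabilityMeasure μ] (hm : m ≤ m0)
    {ε X : Ω → ℝ} {M : ℝ} (hε : StronglyMeasurable[m] ε) (hεbd : ∀ᵐ ω ∂μ, |ε ω| ≤ M)
    (hX : MemLp X 2 μ) :
    cov[ε, X; μ] ^ 2 ≤ M ^ 2 * Var[μ[X | m]; μ] := by
  have hεIcc : ∀ᵐ ω ∂μ, ε ω ∈ Set.Icc (-M) M := hεbd.mono fun ω hω => abs_le.1 hω
  have hεmeas : AEStronglyMeasurable ε μ := (hε.mono hm).aestronglyMeasurable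
  have hvar : Var[ε; μ] ≤ M ^ 2 := by
    simpa using variance_le_sq_of_bounded hεIcc hεmeas.aemeasurable
  have hε2 : MemLp ε 2 μ := memLp_of_bounded hεIcc hεmeas 2
  calc cov[ε, X; μ] ^ 2 = cov[ε, μ[X | m]; μ] ^ 2 := by rw [covariance_condExp_right hm hε hε2 hX]
    _ ≤ Var[ε; μ] * Var[μ[X | m]; μ] :=
        sq_covariance_le_variance_mul_variance hε2 (hX.condExp one_le_two)
    _ ≤ M ^ 2 * Var[μ[X | m]; μ] := mul_le_mul_of_nonneg_right hvar (variance_nonneg _ _)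

lemma integral_sq_condExp_le_of_le [IsFiniteMeasure μ] {X Y : Ω → ℝ} (hX0 : 0 ≤ᵐ[μ] X)
    (hXY : X ≤ᵐ[μ] Y) (hX : MemLp X 2 μ) (hY : MemLp Y 2 μ) :
    ∫ ω, μ[X | m] ω ^ 2 ∂μ ≤ ∫ ω, μ[Y | m] ω ^ 2 ∂μ := by
  refine integral_mono_ae (hX.condExp one_le_two).integrable_sq
    (hY.condExp one_le_two).integrable_sq ?_
  filter_upwards [condExp_nonneg (m := m) hX0,
    condExp_mono (m := m) (hX.integrable one_le_two) (hY.integrable one_le_two) hXY]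
    with ω h0 hle
  exact pow_le_pow_left₀ h0 hle 2

/-- `Var[μ[X z | m]] = 𝔼[μ[X z | m]²] - 𝔼[X z]²` is a difference of monotone functions of `z`. -/
lemma intervalIntegrable_variance_condExp_of_monotone [IsProbabilityMeasure μ] (hm : m ≤ m0)
    {X : ℝ → Ω → ℝ} (hX0 : ∀ z, 0 ≤ᵐ[μ] X z) (hXmono : ∀ z z', z ≤ z' → X z ≤ᵐ[μ] X z')
    (hX : ∀ z, MemLp (X z) 2 μ) (a b : ℝ) :
    IntervalIntegrable (fun z => Var[μ[X z | m]; μ]) volume a b := by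
  have hvar : ∀ z, Var[μ[X z | m]; μ] = ∫ ω, μ[X z | m] ω ^ 2 ∂μ - (∫ ω, X z ω ∂μ) ^ 2 := by
    intro z
    rw [variance_eq_sub ((hX z).condExp one_le_two), integral_condExp hm]
    rfl
  have hsq_mono : Monotone fun z => ∫ ω, μ[X z | m] ω ^ 2 ∂μ := fun z z' hzz' =>
    integral_sq_condExp_le_of_le (hX0 z) (hXmono z z' hzz') (hX z) (hX z')
  have hmean_mono : Monotone fun z => (∫ ω, X z ω ∂μ) ^ 2 := fun z z' hzz' =>
    pow_le_pow_left₀ (integral_nonneg_of_ae (hX0 z))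
      (integral_mono_ae ((hX z).integrable one_le_two) ((hX z').integrable one_le_two)
        (hXmono z z' hzz')) 2
  simp_rw [hvar]
  exact hsq_mono.intervalIntegrable.sub hmean_mono.intervalIntegrable

end Covariance

lemma sq_intervalIntegral_le {f : ℝ → ℝ} {a b : ℝ} (hab : a ≤ b)
    (hf : IntervalIntegrable f volume a b)
    (hf2 : IntervalIntegrable (fun x => f x ^ 2) volume a b) :
    (∫ x in a..b, f x) ^ 2 ≤ (b - a) * ∫ x in a..b, f x ^ 2 := by
  rw [intervalIntegral.integral_of_le hab, intervalIntegral.integral_of_le hab]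
  have hfL2 : MemLp f 2 (volume.restrict (Set.Ioc a b)) :=
    (memLp_two_iff_integrable_sq hf.1.aestronglyMeasurable).2 hf2.1
  simpa [hab, mul_comm] using
    sq_integral_mul_le_integral_sq_mul_integral_sq hfL2 (memLp_const (1 : ℝ))

lemma sq_intervalIntegral_le_of_sq_le {f g : ℝ → ℝ} {a b : ℝ} (hab : a ≤ b)
    (hf : IntervalIntegrable f volume a b) (hg : IntervalIntegrable g volume a b)
    (hfg : ∀ x, f x ^ 2 ≤ g x) :
    (∫ x in a..b, f x) ^ 2 ≤ (b - a) * ∫ x in a..b, g x := by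
  have hf2 : IntervalIntegrable (fun x => f x ^ 2) volume a b :=
    hg.mono_fun' (hf.def'.aestronglyMeasurable.pow 2) (ae_of_all _ fun x => by simpa using hfg x)
  calc (∫ x in a..b, f x) ^ 2 ≤ (b - a) * ∫ x in a..b, f x ^ 2 := sq_intervalIntegral_le hab hf hf2
    _ ≤ (b - a) * ∫ x in a..b, g x := by
        gcongr
        exact intervalIntegral.integral_mono_on hab hf2 hg fun x _ => hfg x

lemma intervalIntegral_indicator_le {a b x : ℝ} (hx : x ∈ Set.Icc a b) :
    ∫ z in a..b, (if x ≤ z then (1 : ℝ) else 0) = b - x := by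
  have hae : (fun z => if x ≤ z then (1 : ℝ) else 0) =ᵐ[volume] (Set.Ioi x).indicator 1 := by
    filter_upwards [compl_mem_ae_iff.2 (measure_singleton x)] with z hz
    simp [Set.indicator, lt_iff_le_and_ne, Ne.symm hz]
  rw [intervalIntegral.integral_of_le (hx.1.trans hx.2), integral_congr_ae (ae_restrict_of_ae hae),
    integral_indicator_one measurableSet_Ioi, measureReal_restrict_apply measurableSet_Ioi,
    Set.inter_comm, Set.Ioc_inter_Ioi, max_eq_right hx.1, Real.volume_real_Ioc_of_le hx.2]

section IndicatorLE

variable {Ω : Type*} {m m0 : MeasurableSpace Ω} {μ : Measure Ω} {ε Z : Ω → ℝ}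

lemma memLp_indicator_le [IsFiniteMeasure μ] (hZ : Measurable Z) (z : ℝ) (p : ENNReal) :
    MemLp (fun ω => if Z ω ≤ z then (1 : ℝ) else 0) p μ := by
  refine memLp_of_bounded (a := 0) (b := 1) (ae_of_all _ fun ω => ?_)
    (measurable_const.ite (hZ measurableSet_Iic) measurable_const).aestronglyMeasurable p
  split_ifs <;> simp

lemma intervalIntegrable_variance_condExp_indicator_le [IsProbabilityMeasure μ] (hm : m ≤ m0)
    (hZ : Measurable Z) (a b : ℝ) :
    IntervalIntegrable (fun z => Var[μ[fun ω => if Z ω ≤ z then (1 : ℝ) else 0 | m]; μ])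
      volume a b := by
  refine intervalIntegrable_variance_condExp_of_monotone hm
    (fun z => ae_of_all _ fun ω => ?_) (fun z z' hzz' => ae_of_all _ fun ω => ?_)
    (fun z => memLp_indicator_le hZ z 2) a b
  · split_ifs <;> simp
  · split_ifs with hz hz' <;> first | simp | exact absurd (hz.trans hzz') hz'

lemma integrable_uncurry_mul_indicator_le [SFinite μ] (hε : Integrable ε μ) (hZ : Measurable Z)
    (a b : ℝ) :
    Integrable (Function.uncurry fun z ω => ε ω * if Z ω ≤ z then (1 : ℝ) else 0)
      ((volume.restrict (Set.uIoc a b)).prod μ) := by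
  have : IsFiniteMeasure (volume.restrict (Set.uIoc a b)) := Real.isFiniteMeasure_restrict_Ioc _ _
  have hind : Measurable fun p : ℝ × Ω => if Z p.2 ≤ p.1 then (1 : ℝ) else 0 :=
    Measurable.ite (measurableSet_le (hZ.comp measurable_snd) measurable_fst)
      measurable_const measurable_const
  refine (hε.comp_snd _).mul_bdd (c := 1) hind.aestronglyMeasurable (ae_of_all _ fun p => ?_)
  split_ifs <;> simp

lemma intervalIntegrable_integral_mul_indicator_le [SFinite μ] (hε : Integrable ε μ)
    (hZ : Measurable Z) (a b : ℝ) :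
    IntervalIntegrable (fun z => ∫ ω, ε ω * (if Z ω ≤ z then (1 : ℝ) else 0) ∂μ) volume a b :=
  intervalIntegrable_iff.2 (integrable_uncurry_mul_indicator_le hε hZ a b).integral_prod_left

lemma intervalIntegral_integral_mul_indicator_le [SFinite μ] (hε : Integrable ε μ)
    (hZ : Measurable Z) {a b : ℝ} (hZab : ∀ ω, Z ω ∈ Set.Icc a b) :
    ∫ z in a..b, ∫ ω, ε ω * (if Z ω ≤ z then (1 : ℝ) else 0) ∂μ = ∫ ω, ε ω * (b - Z ω) ∂μ := by
  rw [intervalIntegral_integral_swap (integrable_uncurry_mul_indicator_le hε hZ a b)]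
  congr 1 with ω
  rw [intervalIntegral.integral_const_mul, intervalIntegral_indicator_le (hZab ω)]

end IndicatorLE

/-- If `E[ε] = 0`, `|ε| ≤ M` a.s., and `Z ∈ [zL, zH]`, then
`∫_{zL}^{zH} Var(E[1{Z ≤ z} | σ(ε)]) dz ≥ Cov(ε, Z)² / ((zH - zL)·M²)`. -/
theorem integral_variance_condexp_indicator_ge
    {Ω : Type*} {m0 : MeasurableSpace Ω} (μ : Measure Ω) [IsProbabilityMeasure μ]
    (ε Z : Ω → ℝ) (M zL zH : ℝ) (hM : 0 < M) (hz : zL < zH)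
    (hε : Measurable ε) (hZ : Measurable Z)
    (hεbd : ∀ᵐ ω ∂μ, |ε ω| ≤ M)
    (hZbd : ∀ ω, Z ω ∈ Set.Icc zL zH)
    (hmean : ∫ ω, ε ω ∂μ = 0) :
    (∫ z in zL..zH,
        variance (μ[fun ω => (if Z ω ≤ z then (1:ℝ) else 0)
          | MeasurableSpace.comap ε Real.measurableSpace]) μ)
      ≥ ((∫ ω, ε ω * Z ω ∂μ) - (∫ ω, ε ω ∂μ) * (∫ ω, Z ω ∂μ)) ^ 2
          / ((zH - zL) * M ^ 2) := by
  set m := MeasurableSpace.comap ε Real.measurableSpace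
  have hεL2 : MemLp ε 2 μ :=
    memLp_of_bounded (hεbd.mono fun ω hω => abs_le.1 hω) hε.aestronglyMeasurable 2
  have hεint : Integrable ε μ := hεL2.integrable one_le_two
  have hcov_bound : ∀ z, (∫ ω, ε ω * (if Z ω ≤ z then (1 : ℝ) else 0) ∂μ) ^ 2
      ≤ M ^ 2 * Var[μ[fun ω => if Z ω ≤ z then (1 : ℝ) else 0 | m]; μ] := fun z => by
    have hcov := sq_covariance_le_sq_mul_variance_condExp hε.comap_le
      (comap_measurable ε).stronglyMeasurable hεbd (memLp_indicator_le hZ z 2)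
    rwa [covariance_eq_sub hεL2 (memLp_indicator_le hZ z 2), hmean, zero_mul, sub_zero] at hcov
  have hfubini : ∫ z in zL..zH, ∫ ω, ε ω * (if Z ω ≤ z then (1 : ℝ) else 0) ∂μ
      = -∫ ω, ε ω * Z ω ∂μ := by
    have hεZ : Integrable (fun ω => ε ω * Z ω) μ :=
      hεint.mul_bdd hZ.aestronglyMeasurable
        (ae_of_all _ fun ω => abs_le_max_abs_abs (hZbd ω).1 (hZbd ω).2)
    simp_rw [intervalIntegral_integral_mul_indicator_le hεint hZ hZbd, mul_sub,
      integral_sub (hεint.mul_const zH) hεZ, integral_mul_const, hmean, zero_mul, zero_sub]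
  rw [hmean, zero_mul, sub_zero, ge_iff_le, div_le_iff₀ (by positivity), ← neg_sq, ← hfubini]
  calc _ ≤ (zH - zL) *
        ∫ z in zL..zH, M ^ 2 * Var[μ[fun ω => if Z ω ≤ z then (1 : ℝ) else 0 | m]; μ] :=
        sq_intervalIntegral_le_of_sq_le hz.le
          (intervalIntegrable_integral_mul_indicator_le hεint hZ zL zH)
          ((intervalIntegrable_variance_condExp_indicator_le hε.comap_le hZ zL zH).const_mul _)
          hcov_bound
    _ = _ := by
        rw [intervalIntegral.integral_const_mul]
        ring
end
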